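/- If 4ξ < 1, then γ + 2ξη < 1 and ξ − η ≤ 1. Consequently, the solvability set certified by the condition of Wang et al., S_w = {S ∈ ℂ^n : 4ξ < 1}, is contained in the solvability set certified by the proposed condition, S_p = {S ∈ ℂ^n : γ + 2ξη < 1 and ξ − η ≤ 1}. -/

import Mathlib

open Complex

/-- `η_i := Σ_j Ẑ_{ij} · conj(S_j)` -/
noncomputable def etaI {n : ℕ} (Z : Matrix (Fin n) (Fin n) ℂ) (S : Fin n → ℂ) (i : Fin n) : ℂ :=
  ∑ j, Z i j * (starRingEnd ℂ) (S j)

/-- `ξ_i := Σ_j |Ẑ_{ij} · S_j|` -/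
noncomputable def xiI {n : ℕ} (Z : Matrix (Fin n) (Fin n) ℂ) (S : Fin n → ℂ) (i : Fin n) : ℝ :=
  ∑ j, ‖Z i j * S j‖

/-- `γ_i := 2(ξ_i + Re η_i) − ξ_i² − |η_i|²` -/
noncomputable def gammaI {n : ℕ} (Z : Matrix (Fin n) (Fin n) ℂ) (S : Fin n → ℂ) (i : Fin n) : ℝ :=
  2 * (xiI Z S i + (etaI Z S i).re) - (xiI Z S i) ^ 2 - ‖etaI Z S i‖ ^ 2

/-- `η := max_i |η_i|` -/
noncomputable def etaMax {n : ℕ} (Z : Matrix (Fin n) (Fin n) ℂ) (S : Fin n → ℂ) : ℝ :=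
  ⨆ i, ‖etaI Z S i‖

/-- `ξ := max_i ξ_i` -/
noncomputable def xiMax {n : ℕ} (Z : Matrix (Fin n) (Fin n) ℂ) (S : Fin n → ℂ) : ℝ :=
  ⨆ i, xiI Z S i

/-- `γ := max_i γ_i` -/
noncomputable def gammaMax {n : ℕ} (Z : Matrix (Fin n) (Fin n) ℂ) (S : Fin n → ℂ) : ℝ :=
  ⨆ i, gammaI Z S i

/-- `r̲ := sqrt((1−γ − sqrt((1−γ)² − 4ξ²η²))/(2ξ²))` -/
noncomputable def rLow {n : ℕ} (Z : Matrix (Fin n) (Fin n) ℂ) (S : Fin n → ℂ) : ℝ :=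
  Real.sqrt ((1 - gammaMax Z S -
      Real.sqrt ((1 - gammaMax Z S) ^ 2 - 4 * (xiMax Z S) ^ 2 * (etaMax Z S) ^ 2)) /
    (2 * (xiMax Z S) ^ 2))

/-- `r̄ := sqrt((1−γ + sqrt((1−γ)² − 4ξ²η²))/(2ξ²))` -/
noncomputable def rHigh {n : ℕ} (Z : Matrix (Fin n) (Fin n) ℂ) (S : Fin n → ℂ) : ℝ :=
  Real.sqrt ((1 - gammaMax Z S +
      Real.sqrt ((1 - gammaMax Z S) ^ 2 - 4 * (xiMax Z S) ^ 2 * (etaMax Z S) ^ 2)) /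
    (2 * (xiMax Z S) ^ 2))

/-- the fixed point power flow map `F(v)_i := 1 − Σ_j Ẑ_{ij}·conj(S_j)/conj(v_j)` -/
noncomputable def pfMap {n : ℕ} (Z : Matrix (Fin n) (Fin n) ℂ) (S : Fin n → ℂ)
    (v : Fin n → ℂ) : Fin n → ℂ :=
  fun i => 1 - ∑ j, Z i j * (starRingEnd ℂ) (S j) / (starRingEnd ℂ) (v j)

/-
Each `|η_i|` is at most `ξ_i` by the triangle inequality, so `0 ≤ η ≤ ξ`. Since `t ↦ 2t - t²`
is monotone on `t ≤ 1`, bounding `Re η_i ≤ |η_i|` gives `γ ≤ (2ξ - ξ²) + (2η - η²)`, hence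
`γ + 2ξη ≤ 2(ξ + η) - (ξ - η)² ≤ 4ξ`. Both claims then follow from `ξ < 1/4`.
-/

lemma two_mul_sub_sq_le_of_le {a b : ℝ} (hab : a ≤ b) (hb : b ≤ 1) :
    2 * a - a ^ 2 ≤ 2 * b - b ^ 2 := by
  nlinarith

section

variable {n : ℕ} (Z : Matrix (Fin n) (Fin n) ℂ) (S : Fin n → ℂ)

lemma xiI_nonneg (i : Fin n) : 0 ≤ xiI Z S i :=
  Finset.sum_nonneg fun _ _ => norm_nonneg _

lemma norm_etaI_le_xiI (i : Fin n) : ‖etaI Z S i‖ ≤ xiI Z S i :=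
  (norm_sum_le _ _).trans_eq <| Finset.sum_congr rfl fun j _ => by
    rw [norm_mul, norm_mul, Complex.norm_conj]

lemma xiI_le_xiMax (i : Fin n) : xiI Z S i ≤ xiMax Z S :=
  le_ciSup (Set.finite_range _).bddAbove i

lemma norm_etaI_le_etaMax (i : Fin n) : ‖etaI Z S i‖ ≤ etaMax Z S :=
  le_ciSup (f := fun i => ‖etaI Z S i‖) (Set.finite_range _).bddAbove i

lemma xiMax_nonneg : 0 ≤ xiMax Z S :=
  Real.iSup_nonneg (xiI_nonneg Z S)

lemma etaMax_nonneg : 0 ≤ etaMax Z S :=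
  Real.iSup_nonneg fun _ => norm_nonneg _

lemma etaMax_le_xiMax : etaMax Z S ≤ xiMax Z S :=
  Real.iSup_le (fun i => (norm_etaI_le_xiI Z S i).trans (xiI_le_xiMax Z S i)) (xiMax_nonneg Z S)

lemma gammaI_le (i : Fin n) (hxi : xiMax Z S ≤ 1) :
    gammaI Z S i ≤ (2 * xiMax Z S - xiMax Z S ^ 2) + (2 * etaMax Z S - etaMax Z S ^ 2) := by
  have hxi_i := two_mul_sub_sq_le_of_le (xiI_le_xiMax Z S i) hxi
  have heta_i := two_mul_sub_sq_le_of_le (norm_etaI_le_etaMax Z S i)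
    ((etaMax_le_xiMax Z S).trans hxi)
  have hre := Complex.re_le_norm (etaI Z S i)
  unfold gammaI
  linarith

lemma gammaMax_le (hxi : xiMax Z S ≤ 1) :
    gammaMax Z S ≤ (2 * xiMax Z S - xiMax Z S ^ 2) + (2 * etaMax Z S - etaMax Z S ^ 2) := by
  have hxi0 := xiMax_nonneg Z S
  have heta0 := etaMax_nonneg Z S
  have heta1 := (etaMax_le_xiMax Z S).trans hxi
  exact Real.iSup_le (fun i => gammaI_le Z S i hxi) (by nlinarith)

lemma gammaMax_add_two_mul_xiMax_mul_etaMax_le (hxi : xiMax Z S ≤ 1) :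
    gammaMax Z S + 2 * xiMax Z S * etaMax Z S ≤ 4 * xiMax Z S := by
  have hγ := gammaMax_le Z S hxi
  have hηξ := etaMax_le_xiMax Z S
  nlinarith [sq_nonneg (xiMax Z S - etaMax Z S)]

lemma proposed_condition_of_four_mul_xiMax_lt_one (h4 : 4 * xiMax Z S < 1) :
    gammaMax Z S + 2 * xiMax Z S * etaMax Z S < 1 ∧ xiMax Z S - etaMax Z S ≤ 1 := by
  have hxi : xiMax Z S ≤ 1 := by linarith [xiMax_nonneg Z S]
  exact ⟨(gammaMax_add_two_mul_xiMax_mul_etaMax_le Z S hxi).trans_lt h4,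
    by linarith [etaMax_nonneg Z S]⟩

end

theorem wang_condition_implies_proposed_general {n : ℕ}
    (Z : Matrix (Fin n) (Fin n) ℂ) :
    (∀ S : Fin n → ℂ, 4 * xiMax Z S < 1 →
      gammaMax Z S + 2 * xiMax Z S * etaMax Z S < 1 ∧ xiMax Z S - etaMax Z S ≤ 1) ∧
    {S : Fin n → ℂ | 4 * xiMax Z S < 1} ⊆
      {S : Fin n → ℂ |
        gammaMax Z S + 2 * xiMax Z S * etaMax Z S < 1 ∧ xiMax Z S - etaMax Z S ≤ 1} :=
  ⟨proposed_condition_of_four_mul_xiMax_lt_one Z,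
    fun S hS => proposed_condition_of_four_mul_xiMax_lt_one Z S hS⟩

/-- `4ξ < 1` implies `γ + 2ξη < 1` and `ξ − η ≤ 1`; consequently the
solvability set of Wang et al. is contained in the proposed solvability set. -/
theorem wang_condition_implies_proposed {n : ℕ} (hn : 1 ≤ n)
    (Z : Matrix (Fin n) (Fin n) ℂ) (hZ : IsUnit Z.det) :
    (∀ S : Fin n → ℂ, 4 * xiMax Z S < 1 →
      gammaMax Z S + 2 * xiMax Z S * etaMax Z S < 1 ∧ xiMax Z S - etaMax Z S ≤ 1) ∧
    {S : Fin n → ℂ | 4 * xiMax Z S < 1} ⊆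
      {S : Fin n → ℂ |
        gammaMax Z S + 2 * xiMax Z S * etaMax Z S < 1 ∧ xiMax Z S - etaMax Z S ≤ 1} :=
  wang_condition_implies_proposed_general Z
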